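/- (Key step of Proposition 3) Let n ≥ 1 and let V be any finite set of pairwise distinct elements of SA(n), with |V| = m, and let M_V be the m × 2^n real matrix whose rows are the transposes of the elements of V. Then the kernel of the linear map x ↦ M_V x on ℝ^(2^n) equals the linear span of SA(n) \ V, and has dimension 2^n − m. -/

import Mathlib

noncomputable def Smat (k : ℕ) : Matrix (Fin (2 ^ (k + 1))) (Fin (2 ^ k)) ℝ :=
  Matrix.of fun i j =>
    if (i : ℕ) < 2 ^ k then (if (i : ℕ) = (j : ℕ) then 1 else 0)
    else (if (i : ℕ) + (j : ℕ) = 2 ^ (k + 1) - 1 then 1 else 0)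

noncomputable def Amat (k : ℕ) : Matrix (Fin (2 ^ (k + 1))) (Fin (2 ^ k)) ℝ :=
  Matrix.of fun i j =>
    if (i : ℕ) < 2 ^ k then (if (i : ℕ) = (j : ℕ) then -1 else 0)
    else (if (i : ℕ) + (j : ℕ) = 2 ^ (k + 1) - 1 then 1 else 0)

noncomputable def Fmat (b : Bool) (k : ℕ) : Matrix (Fin (2 ^ (k + 1))) (Fin (2 ^ k)) ℝ :=
  if b then Amat k else Smat k

noncomputable def prodVec : (n : ℕ) → (Fin n → Bool) → (Fin (2 ^ n) → ℝ)
  | 0, _ => fun _ => 1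
  | n + 1, c => (Fmat (c (Fin.last n)) n).mulVec (prodVec n fun i => c i.castSucc)

def SA (n : ℕ) : Set (Fin (2 ^ n) → ℝ) := { v | ∃ c : Fin n → Bool, v = prodVec n c }

/-!
The vectors of SA(n) are pairwise orthogonal, each of squared norm 2^n: since
`F u ⬝ F' w = (s s' + 1) (u ⬝ w)`, where `s, s' = ±1` are the signs of the upper blocks of
`F, F'`, the dot product of two such products is `∏ (s_k s'_k + 1)`, which is `2^n` or `0`.
So SA(n) is an orthogonal basis of `ℝ^(2^n)`, and the kernel of `M_V`, the orthogonal complement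
of `V`, is spanned by the remaining basis vectors.
-/

open Matrix

def boolSign (b : Bool) : ℝ := if b then -1 else 1

lemma boolSign_mul_boolSign_add_one (a b : Bool) :
    boolSign a * boolSign b + 1 = if a = b then 2 else 0 := by
  cases a <;> cases b <;> norm_num [boolSign]

lemma Fmat_apply (b : Bool) (k : ℕ) (i : Fin (2 ^ (k + 1))) (j : Fin (2 ^ k)) :
    Fmat b k i j = if (i : ℕ) < 2 ^ k then (if (i : ℕ) = j then boolSign b else 0)
      else (if (i : ℕ) + j = 2 ^ (k + 1) - 1 then 1 else 0) := by
  cases b <;> simp [Fmat, Smat, Amat, boolSign]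

lemma Fmat_mulVec_cast_castAdd (b : Bool) (k : ℕ) (u : Fin (2 ^ k) → ℝ) (j : Fin (2 ^ k)) :
    (Fmat b k *ᵥ u) (Fin.cast (Nat.two_pow_succ k).symm (Fin.castAdd _ j)) =
      boolSign b * u j := by
  simp [mulVec, dotProduct, Fmat_apply, Fin.val_inj]

lemma Fmat_mulVec_cast_natAdd (b : Bool) (k : ℕ) (u : Fin (2 ^ k) → ℝ) (j : Fin (2 ^ k)) :
    (Fmat b k *ᵥ u) (Fin.cast (Nat.two_pow_succ k).symm (Fin.natAdd _ j)) = u j.rev := by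
  have hrev : ∀ x : Fin (2 ^ k), (j : ℕ) + 2 ^ k + x = 2 ^ (k + 1) - 1 ↔ x = j.rev := by
    intro x
    rw [Fin.ext_iff, Fin.val_rev, Nat.two_pow_succ]
    omega
  simp [mulVec, dotProduct, Fmat_apply, hrev]

lemma dotProduct_Fmat_mulVec (b b' : Bool) (k : ℕ) (u w : Fin (2 ^ k) → ℝ) :
    Fmat b k *ᵥ u ⬝ᵥ Fmat b' k *ᵥ w = (boolSign b * boolSign b' + 1) * (u ⬝ᵥ w) := by
  rw [dotProduct, ← Fintype.sum_equiv (finCongr (Nat.two_pow_succ k).symm) _ _ (fun _ => rfl),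
    Fin.sum_univ_add]
  simp only [finCongr_apply, Fmat_mulVec_cast_castAdd, Fmat_mulVec_cast_natAdd]
  rw [Fintype.sum_equiv Fin.revPerm (fun j => u j.rev * w j.rev) (fun j => u j * w j)
      (fun _ => rfl), dotProduct, add_mul, one_mul, Finset.mul_sum]
  congr 1
  exact Finset.sum_congr rfl fun _ _ => by ring

lemma dotProduct_prodVec_eq_prod : ∀ (n : ℕ) (c c' : Fin n → Bool),
    prodVec n c ⬝ᵥ prodVec n c' = ∏ i, (boolSign (c i) * boolSign (c' i) + 1)
  | 0, _, _ => by simp [prodVec, dotProduct]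
  | n + 1, c, c' => by
    rw [prodVec, prodVec, dotProduct_Fmat_mulVec, dotProduct_prodVec_eq_prod n,
      Fin.prod_univ_castSucc, mul_comm]

lemma dotProduct_prodVec (n : ℕ) (c c' : Fin n → Bool) :
    prodVec n c ⬝ᵥ prodVec n c' = if c = c' then 2 ^ n else 0 := by
  simp only [dotProduct_prodVec_eq_prod, boolSign_mul_boolSign_add_one]
  split_ifs with h
  · simp [h]
  · obtain ⟨i, hi⟩ := Function.ne_iff.mp h
    exact Finset.prod_eq_zero (Finset.mem_univ i) (if_neg hi)

section Orthogonal

variable {K ι N : Type*} [Field K] [Fintype ι] [Fintype N] {b : ι → N → K}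

lemma dotProduct_sum_smul_of_pairwise (horth : Pairwise fun i j => b i ⬝ᵥ b j = 0)
    (g : ι → K) (i : ι) : b i ⬝ᵥ ∑ j, g j • b j = g i * (b i ⬝ᵥ b i) := by
  rw [dotProduct_sum, Finset.sum_eq_single i
    (fun j _ hji => by rw [dotProduct_smul, horth hji.symm, smul_zero]) (by simp),
    dotProduct_smul, smul_eq_mul]

lemma linearIndependent_of_pairwise_dotProduct_eq_zero
    (horth : Pairwise fun i j => b i ⬝ᵥ b j = 0) (hself : ∀ i, b i ⬝ᵥ b i ≠ 0) :
    LinearIndependent K b := by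
  refine Fintype.linearIndependent_iff.mpr fun g hg i => ?_
  have := dotProduct_sum_smul_of_pairwise horth g i
  rw [hg, dotProduct_zero] at this
  exact (mul_eq_zero.mp this.symm).resolve_right (hself i)

end Orthogonal

lemma mem_ker_mulVecLin_of_rows {K N : Type*} [CommSemiring K] [Fintype N]
    (V : Finset (N → K)) (x : N → K) :
    x ∈ LinearMap.ker (Matrix.of fun (v : {x // x ∈ V}) (j : N) => (v : N → K) j).mulVecLin
      ↔ ∀ v ∈ V, v ⬝ᵥ x = 0 := by
  simp [funext_iff, mulVec]

lemma LinearIndependent.finrank_span_image {K V ι : Type*} [DivisionRing K] [AddCommGroup V]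
    [Module K V] {b : ι → V} (hb : LinearIndependent K b) (T : Finset ι) :
    Module.finrank K (Submodule.span K (b '' T)) = T.card := by
  rw [Set.image_eq_range, ← Fintype.card_coe]
  exact finrank_span_eq_card (hb.comp _ Subtype.val_injective)

namespace Module.Basis

variable {K ι N : Type*} [Field K] [Fintype ι] [Fintype N] (b : Basis ι K (N → K))

lemma dotProduct_eq_zero_iff_repr_eq_zero (horth : Pairwise fun i j => b i ⬝ᵥ b j = 0)
    (hself : ∀ i, b i ⬝ᵥ b i ≠ 0) (x : N → K) (i : ι) :
    b i ⬝ᵥ x = 0 ↔ b.repr x i = 0 := by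
  conv_lhs => rw [← b.sum_repr x, dotProduct_sum_smul_of_pairwise horth]
  simp [hself i]

lemma mem_span_image_compl_iff (horth : Pairwise fun i j => b i ⬝ᵥ b j = 0)
    (hself : ∀ i, b i ⬝ᵥ b i ≠ 0) (T : Set ι) (x : N → K) :
    x ∈ Submodule.span K (b '' Tᶜ) ↔ ∀ i ∈ T, b i ⬝ᵥ x = 0 := by
  simp only [b.mem_span_image, b.dotProduct_eq_zero_iff_repr_eq_zero horth hself, Set.subset_def,
    Finset.mem_coe, Finsupp.mem_support_iff, Set.mem_compl_iff]
  exact forall_congr' fun i => by tauto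

end Module.Basis

lemma pairwise_dotProduct_prodVec (n : ℕ) :
    Pairwise fun c c' : Fin n → Bool => prodVec n c ⬝ᵥ prodVec n c' = 0 :=
  fun c c' h => (dotProduct_prodVec n c c').trans (if_neg h)

lemma dotProduct_prodVec_self_ne_zero (n : ℕ) (c : Fin n → Bool) :
    prodVec n c ⬝ᵥ prodVec n c ≠ 0 := by
  rw [dotProduct_prodVec, if_pos rfl]
  positivity

lemma linearIndependent_prodVec (n : ℕ) : LinearIndependent ℝ (prodVec n) :=
  linearIndependent_of_pairwise_dotProduct_eq_zero (pairwise_dotProduct_prodVec n)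
    (dotProduct_prodVec_self_ne_zero n)

noncomputable def prodVecBasis (n : ℕ) :
    Module.Basis (Fin n → Bool) ℝ (Fin (2 ^ n) → ℝ) :=
  basisOfLinearIndependentOfCardEqFinrank (linearIndependent_prodVec n) (by simp)

@[simp]
lemma coe_prodVecBasis (n : ℕ) : ⇑(prodVecBasis n) = prodVec n :=
  coe_basisOfLinearIndependentOfCardEqFinrank _ _

lemma SA_eq_range (n : ℕ) : SA n = Set.range (prodVec n) :=
  Set.ext fun _ => exists_congr fun _ => eq_comm

theorem stmt15_general (n : ℕ) (V : Finset (Fin (2 ^ n) → ℝ)) (m : ℕ)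
    (hV : (V : Set (Fin (2 ^ n) → ℝ)) ⊆ SA n) (hm : V.card = m) :
    LinearMap.ker
        (Matrix.of fun (v : {x // x ∈ V}) (j : Fin (2 ^ n)) =>
          (v : Fin (2 ^ n) → ℝ) j).mulVecLin
      = Submodule.span ℝ (SA n \ (V : Set (Fin (2 ^ n) → ℝ))) ∧
    Module.finrank ℝ
        (LinearMap.ker
          (Matrix.of fun (v : {x // x ∈ V}) (j : Fin (2 ^ n)) =>
            (v : Fin (2 ^ n) → ℝ) j).mulVecLin)
      = 2 ^ n - m := by
  classical
  set T : Finset (Fin n → Bool) := {c | prodVec n c ∈ V}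
  have himage : T.image (prodVec n) = V := by
    ext v
    simp only [Finset.mem_image, Finset.mem_filter, Finset.mem_univ, true_and, T]
    refine ⟨fun ⟨c, hc, hcv⟩ => hcv ▸ hc, fun hv => ?_⟩
    obtain ⟨c, rfl⟩ := hV hv
    exact ⟨c, hv, rfl⟩
  have hSA : SA n \ V = prodVec n '' ↑Tᶜ := by
    rw [SA_eq_range, ← himage, Finset.coe_image, ← Set.image_univ,
      ← Set.image_sdiff (linearIndependent_prodVec n).injective, Finset.coe_compl,
      Set.compl_eq_univ_sdiff]
  have hker : LinearMap.ker (Matrix.of fun (v : {x // x ∈ V}) (j : Fin (2 ^ n)) =>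
      (v : Fin (2 ^ n) → ℝ) j).mulVecLin = Submodule.span ℝ (SA n \ V) := by
    ext x
    rw [mem_ker_mulVecLin_of_rows, hSA, Finset.coe_compl, ← coe_prodVecBasis,
      (prodVecBasis n).mem_span_image_compl_iff (by simpa using pairwise_dotProduct_prodVec n)
        (by simpa using dotProduct_prodVec_self_ne_zero n),
      ← himage, Finset.forall_mem_image]
    simp
  refine ⟨hker, ?_⟩
  rw [hker, hSA, (linearIndependent_prodVec n).finrank_span_image, Finset.card_compl, ← hm,
    ← himage, Finset.card_image_of_injective _ (linearIndependent_prodVec n).injective]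
  simp

/-- key step of Proposition 3: if V is a set of m pairwise distinct
elements of SA(n) and M_V is the m × 2^n matrix whose rows are the transposed
elements of V, then the kernel of x ↦ M_V x equals the linear span of SA(n) \ V
and has dimension 2^n − m. -/
theorem stmt15 (n : ℕ) (hn : 1 ≤ n) (V : Finset (Fin (2 ^ n) → ℝ)) (m : ℕ)
    (hV : (V : Set (Fin (2 ^ n) → ℝ)) ⊆ SA n) (hm : V.card = m) :
    LinearMap.ker
        (Matrix.of fun (v : {x // x ∈ V}) (j : Fin (2 ^ n)) =>
          (v : Fin (2 ^ n) → ℝ) j).mulVecLin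
      = Submodule.span ℝ (SA n \ (V : Set (Fin (2 ^ n) → ℝ))) ∧
    Module.finrank ℝ
        (LinearMap.ker
          (Matrix.of fun (v : {x // x ∈ V}) (j : Fin (2 ^ n)) =>
            (v : Fin (2 ^ n) → ℝ) j).mulVecLin)
      = 2 ^ n - m :=
  stmt15_general n V m hV hm
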